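/- The logic BDi3 (propositional) has the disjunction property and the constructible falsity property: if ⊢ A∨B then ⊢ A or ⊢ B, and if ⊢ ∼(A∧B) then ⊢ ∼A or ⊢ ∼B. -/
import Mathlib


inductive Fm : Type where
  | atom : Nat → Fm
  | bot : Fm
  | snot : Fm → Fm
  | and : Fm → Fm → Fm
  | or : Fm → Fm → Fm
  | imp : Fm → Fm → Fm
deriving DecidableEq

/-- Intuitionistic/Boolean negation `¬A := A → ⊥`. -/
def negFm (A : Fm) : Fm := Fm.imp A Fm.bot

/-- Biconditional `A ↔ B := (A→B) ∧ (B→A)`. -/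
def iffFm (A B : Fm) : Fm := Fm.and (Fm.imp A B) (Fm.imp B A)

/-- Hilbert-style derivability: intuitionistic positive axioms Ax1, Ax2, Ax4–Ax10,
modus ponens, plus extra axioms from `Ax`. -/
inductive Deriv (Ax : Fm → Prop) : Fm → Prop where
  | extra {A} : Ax A → Deriv Ax A
  | ax1 (A B) : Deriv Ax (Fm.imp A (Fm.imp B A))
  | ax2 (A B C) : Deriv Ax (Fm.imp (Fm.imp A (Fm.imp B C)) (Fm.imp (Fm.imp A B) (Fm.imp A C)))
  | ax4 (A B) : Deriv Ax (Fm.imp (Fm.and A B) A)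
  | ax5 (A B) : Deriv Ax (Fm.imp (Fm.and A B) B)
  | ax6 (A B C) : Deriv Ax (Fm.imp (Fm.imp C A) (Fm.imp (Fm.imp C B) (Fm.imp C (Fm.and A B))))
  | ax7 (A B) : Deriv Ax (Fm.imp A (Fm.or A B))
  | ax8 (A B) : Deriv Ax (Fm.imp B (Fm.or A B))
  | ax9 (A B C) : Deriv Ax (Fm.imp (Fm.imp A C) (Fm.imp (Fm.imp B C) (Fm.imp (Fm.or A B) C)))
  | ax10 (A) : Deriv Ax (Fm.imp Fm.bot A)
  | mp {A B} : Deriv Ax (Fm.imp A B) → Deriv Ax A → Deriv Ax B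

/-- The characteristic axioms of (propositional) BDi3. -/
inductive BDi3Ax : Fm → Prop where
  | toSnotBot (A) : BDi3Ax (Fm.imp A (Fm.snot Fm.bot))
  | dne (A) : BDi3Ax (iffFm (Fm.snot (Fm.snot A)) A)
  | dmAnd (A B) : BDi3Ax (iffFm (Fm.snot (Fm.and A B)) (Fm.or (Fm.snot A) (Fm.snot B)))
  | dmOr (A B) : BDi3Ax (iffFm (Fm.snot (Fm.or A B)) (Fm.and (Fm.snot A) (Fm.snot B)))
  | dmImp (A B) : BDi3Ax (iffFm (Fm.snot (Fm.imp A B)) (Fm.and (negFm (Fm.snot A)) (Fm.snot B)))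
  | i2 (A) : BDi3Ax (Fm.imp (Fm.snot A) (negFm A))
  | i3 (A) : BDi3Ax (negFm (negFm (Fm.or A (Fm.snot A))))

namespace BDi3Proof

abbrev D (A : Fm) : Prop := Deriv BDi3Ax A

theorem dT : D (Fm.imp Fm.bot Fm.bot) := Deriv.ax10 _

theorem dLift {A : Fm} (h : D A) (B : Fm) : D (Fm.imp B A) :=
  Deriv.mp (Deriv.ax1 A B) h

theorem dConj {A B : Fm} (ha : D A) (hb : D B) : D (Fm.and A B) :=
  Deriv.mp (Deriv.mp (Deriv.mp (Deriv.ax6 A B (Fm.imp Fm.bot Fm.bot))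
    (dLift ha _)) (dLift hb _)) dT

theorem dIff1 {A B : Fm} (h : D (iffFm A B)) : D (Fm.imp A B) :=
  Deriv.mp (Deriv.ax4 _ _) h

theorem dIff2 {A B : Fm} (h : D (iffFm A B)) : D (Fm.imp B A) :=
  Deriv.mp (Deriv.ax5 _ _) h

theorem dSnotBot : D (Fm.snot Fm.bot) :=
  Deriv.mp (Deriv.extra (BDi3Ax.toSnotBot _)) dT

/-- A classical evaluation showing consistency. -/
def ev : Fm → Prop
  | .atom _ => True
  | .bot => False
  | .snot A => ¬ ev A
  | .and A B => ev A ∧ ev B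
  | .or A B => ev A ∨ ev B
  | .imp A B => ev A → ev B

theorem evSound {A : Fm} (h : D A) : ev A := by
  induction h with
  | extra h =>
    cases h with
    | toSnotBot A => simp [ev]
    | dne A => simp only [iffFm, negFm, ev]; tauto
    | dmAnd A B => simp only [iffFm, negFm, ev]; tauto
    | dmOr A B => simp only [iffFm, negFm, ev]; tauto
    | dmImp A B => simp only [iffFm, negFm, ev]; tauto
    | i2 A => simp only [negFm, ev]; tauto
    | i3 A => simp only [negFm, ev]; tauto
  | mp _ _ ih1 ih2 => exact ih1 ih2
  | ax1 A B => intro a _; exact a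
  | ax2 A B C => intro f g a; exact f a (g a)
  | ax4 A B => exact And.left
  | ax5 A B => exact And.right
  | ax6 A B C => intro f g c; exact ⟨f c, g c⟩
  | ax7 A B => exact Or.inl
  | ax8 A B => exact Or.inr
  | ax9 A B C => intro f g h; cases h with | inl a => exact f a | inr b => exact g b
  | ax10 A => exact False.elim

theorem consis : ¬ D Fm.bot := fun h => evSound h

-- Aczel slash, positive and negative.
mutual
def Sp : Fm → Prop
  | .atom n => D (.atom n)
  | .bot => False
  | .snot A => Sn A
  | .and A B => Sp A ∧ Sp B
  | .or A B => Sp A ∨ Sp B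
  | .imp A B => D (Fm.imp A B) ∧ (Sp A → Sp B)
def Sn : Fm → Prop
  | .atom n => D (Fm.snot (.atom n))
  | .bot => True
  | .snot A => Sp A
  | .and A B => D (Fm.snot (Fm.and A B)) ∧ (Sn A ∨ Sn B)
  | .or A B => Sn A ∧ Sn B
  | .imp A B => D (negFm (Fm.snot A)) ∧ Sn B
end

mutual
def spDeriv : ∀ A, Sp A → D A
  | .atom _, h => h
  | .bot, h => h.elim
  | .snot A, h => snDeriv A h
  | .and A B, h => dConj (spDeriv A h.1) (spDeriv B h.2)
  | .or A B, h =>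
    h.elim (fun ha => Deriv.mp (Deriv.ax7 A B) (spDeriv A ha))
      (fun hb => Deriv.mp (Deriv.ax8 A B) (spDeriv B hb))
  | .imp _ _, h => h.1
def snDeriv : ∀ A, Sn A → D (Fm.snot A)
  | .atom _, h => h
  | .bot, _ => dSnotBot
  | .snot A, h =>
    Deriv.mp (dIff2 (Deriv.extra (BDi3Ax.dne A))) (spDeriv A h)
  | .and _ _, h => h.1
  | .or A B, h =>
    Deriv.mp (dIff2 (Deriv.extra (BDi3Ax.dmOr A B)))
      (dConj (snDeriv A h.1) (snDeriv B h.2))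
  | .imp A B, h =>
    Deriv.mp (dIff2 (Deriv.extra (BDi3Ax.dmImp A B)))
      (dConj h.1 (snDeriv B h.2))
end

theorem fund : ∀ {A : Fm}, D A → Sp A := by
  intro A h
  induction h with
  | mp _ _ ih1 ih2 => exact ih1.2 ih2
  | ax1 A B =>
    exact ⟨Deriv.ax1 A B, fun ha => ⟨dLift (spDeriv A ha) B, fun _ => ha⟩⟩
  | ax2 A B C =>
    refine ⟨Deriv.ax2 A B C, fun h1 => ⟨Deriv.mp (Deriv.ax2 A B C) h1.1, fun h2 => ?_⟩⟩
    exact ⟨Deriv.mp (Deriv.mp (Deriv.ax2 A B C) h1.1) h2.1,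
      fun ha => (h1.2 ha).2 (h2.2 ha)⟩
  | ax4 A B => exact ⟨Deriv.ax4 A B, And.left⟩
  | ax5 A B => exact ⟨Deriv.ax5 A B, And.right⟩
  | ax6 A B C =>
    refine ⟨Deriv.ax6 A B C, fun h1 => ⟨Deriv.mp (Deriv.ax6 A B C) h1.1, fun h2 => ?_⟩⟩
    exact ⟨Deriv.mp (Deriv.mp (Deriv.ax6 A B C) h1.1) h2.1,
      fun hc => ⟨h1.2 hc, h2.2 hc⟩⟩
  | ax7 A B => exact ⟨Deriv.ax7 A B, Or.inl⟩
  | ax8 A B => exact ⟨Deriv.ax8 A B, Or.inr⟩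
  | ax9 A B C =>
    refine ⟨Deriv.ax9 A B C, fun h1 => ⟨Deriv.mp (Deriv.ax9 A B C) h1.1, fun h2 => ?_⟩⟩
    exact ⟨Deriv.mp (Deriv.mp (Deriv.ax9 A B C) h1.1) h2.1,
      fun hab => hab.elim h1.2 h2.2⟩
  | ax10 A => exact ⟨Deriv.ax10 A, False.elim⟩
  | extra hax =>
    cases hax with
    | toSnotBot A =>
      exact ⟨Deriv.extra (BDi3Ax.toSnotBot A), fun _ => trivial⟩
    | dne A =>
      refine ⟨?_, ?_⟩
      · exact ⟨dIff1 (Deriv.extra (BDi3Ax.dne A)), fun h => h⟩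
      · exact ⟨dIff2 (Deriv.extra (BDi3Ax.dne A)), fun h => h⟩
    | dmAnd A B =>
      refine ⟨⟨dIff1 (Deriv.extra (BDi3Ax.dmAnd A B)), fun h => h.2⟩,
        ⟨dIff2 (Deriv.extra (BDi3Ax.dmAnd A B)), fun h => ⟨?_, h⟩⟩⟩
      refine Deriv.mp (dIff2 (Deriv.extra (BDi3Ax.dmAnd A B))) ?_
      exact h.elim
        (fun ha => Deriv.mp (Deriv.ax7 _ _) (snDeriv A ha))
        (fun hb => Deriv.mp (Deriv.ax8 _ _) (snDeriv B hb))
    | dmOr A B =>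
      exact ⟨⟨dIff1 (Deriv.extra (BDi3Ax.dmOr A B)), fun h => h⟩,
        ⟨dIff2 (Deriv.extra (BDi3Ax.dmOr A B)), fun h => h⟩⟩
    | dmImp A B =>
      refine ⟨⟨dIff1 (Deriv.extra (BDi3Ax.dmImp A B)), fun h => ⟨⟨h.1, fun hsa => ?_⟩, h.2⟩⟩,
        ⟨dIff2 (Deriv.extra (BDi3Ax.dmImp A B)), fun h => ⟨h.1.1, h.2⟩⟩⟩
      exact consis (Deriv.mp h.1 (snDeriv A hsa))
    | i2 A =>
      refine ⟨Deriv.extra (BDi3Ax.i2 A), fun hsa => ?_⟩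
      have hna : D (negFm A) := Deriv.mp (Deriv.extra (BDi3Ax.i2 A)) (snDeriv A hsa)
      exact ⟨hna, fun ha => consis (Deriv.mp hna (spDeriv A ha))⟩
    | i3 A =>
      refine ⟨Deriv.extra (BDi3Ax.i3 A), fun h => ?_⟩
      exact consis (Deriv.mp (Deriv.extra (BDi3Ax.i3 A)) h.1)

end BDi3Proof

/-- BDi3 has the disjunction property and the constructible falsity property. -/
theorem bdi3_disjunction_and_constructible_falsity :
    (∀ A B : Fm, Deriv BDi3Ax (Fm.or A B) → Deriv BDi3Ax A ∨ Deriv BDi3Ax B) ∧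
    (∀ A B : Fm, Deriv BDi3Ax (Fm.snot (Fm.and A B)) →
      Deriv BDi3Ax (Fm.snot A) ∨ Deriv BDi3Ax (Fm.snot B)) := by
  constructor
  · intro A B h
    exact (BDi3Proof.fund h).elim
      (fun ha => Or.inl (BDi3Proof.spDeriv A ha))
      (fun hb => Or.inr (BDi3Proof.spDeriv B hb))
  · intro A B h
    have := BDi3Proof.fund h
    exact (this.2).elim
      (fun ha => Or.inl (BDi3Proof.snDeriv A ha))
      (fun hb => Or.inr (BDi3Proof.snDeriv B hb))
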